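/- arXiv:1307.7393 — 3 statements merged into one kernel-verified Lean document; each statement's English description precedes it below -/
import Mathlib

section
/- Let (E_k)_{k≥0} be a sequence of positive real numbers satisfying E_{k+1} ≤ E_k − C·E_{k+1}^{2+δ} for all k ≥ 0, where C > 0 and δ > −1 are constants. Then there exists a positive constant M such that E_k ≤ M/(k+1)^{1/(1+δ)} for all k ≥ 0. -/
open Real

lemma aux1 (α s : ℝ) (hα : 0 < α) (hs0 : 0 ≤ s) (hs1 : s ≤ 1) :
    (1 + s) ^ α ≤ 1 + α * Real.exp α * s := by
  have h1 : (1 + s) ^ α ≤ Real.exp (α * s) := by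
    calc (1 + s) ^ α ≤ (Real.exp s) ^ α :=
          Real.rpow_le_rpow (by linarith) (by linarith [Real.add_one_le_exp s]) hα.le
      _ = Real.exp (α * s) := by
          rw [Real.rpow_def_of_pos (Real.exp_pos s), Real.log_exp, mul_comm]
  have h2 : Real.exp (α * s) ≤ 1 + (α * s) * Real.exp (α * s) := by
    have h := Real.add_one_le_exp (-(α * s))
    have h0 : Real.exp (-(α * s)) * Real.exp (α * s) = 1 := by
      rw [← Real.exp_add]; simp
    nlinarith [Real.exp_pos (α * s)]
  have h3 : Real.exp (α * s) ≤ Real.exp α := by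
    apply Real.exp_le_exp.2; nlinarith
  nlinarith [mul_le_mul_of_nonneg_left h3 (by positivity : (0:ℝ) ≤ α * s)]

lemma aux2 (α a K : ℝ) (hα : 0 < α) (ha : 1 ≤ a) (hK : 2 * α * Real.exp α ≤ K) :
    1 / a ^ α ≤ 1 / (a + 1) ^ α + K / (a + 1) ^ (1 + α) := by
  have ha0 : 0 < a := by linarith
  have hb0 : (0:ℝ) < a + 1 := by linarith
  have hapow : 0 < a ^ α := Real.rpow_pos_of_pos ha0 α
  have hbpow : 0 < (a + 1) ^ α := Real.rpow_pos_of_pos hb0 α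
  have hbpow1 : (a + 1) ^ (1 + α) = (a + 1) * (a + 1) ^ α := by
    rw [Real.rpow_add hb0, Real.rpow_one]
  have hs : (0:ℝ) ≤ 1 / a := by positivity
  have hs1 : 1 / a ≤ 1 := by rw [div_le_one ha0]; linarith
  have hsplit : (a + 1) ^ α = a ^ α * (1 + 1 / a) ^ α := by
    rw [← Real.mul_rpow ha0.le (by linarith)]
    congr 1; field_simp
  have hber : (1 + 1 / a) ^ α ≤ 1 + α * Real.exp α * (1 / a) := aux1 α _ hα hs hs1
  -- key: (a+1)^(1+α) ≤ a^α * ((a+1) + K)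
  have key : (a + 1) ^ (1 + α) ≤ a ^ α * ((a + 1) + K) := by
    rw [hbpow1, hsplit]
    have h2a : (a + 1) / a ≤ 2 := by rw [div_le_iff₀ ha0]; linarith
    have hE : 0 < Real.exp α := Real.exp_pos α
    calc (a + 1) * (a ^ α * (1 + 1 / a) ^ α)
        ≤ (a + 1) * (a ^ α * (1 + α * Real.exp α * (1 / a))) := by
          apply mul_le_mul_of_nonneg_left _ (by linarith)
          exact mul_le_mul_of_nonneg_left hber hapow.le
      _ = a ^ α * ((a + 1) + α * Real.exp α * ((a + 1) / a)) := by
          field_simp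
      _ ≤ a ^ α * ((a + 1) + K) := by
          apply mul_le_mul_of_nonneg_left _ hapow.le
          have : α * Real.exp α * ((a + 1) / a) ≤ 2 * α * Real.exp α := by
            nlinarith [mul_le_mul_of_nonneg_left h2a (by positivity : (0:ℝ) ≤ α * Real.exp α)]
          linarith
  rw [div_add_div _ _ (ne_of_gt hbpow) (ne_of_gt (by rw [hbpow1]; positivity)),
    div_le_div_iff₀ hapow (by positivity)]
  rw [hbpow1]
  calc 1 * ((a + 1) ^ α * ((a + 1) * (a + 1) ^ α))
      = (a + 1) ^ α * ((a + 1) ^ α * (a + 1)) := by ring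
    _ ≤ (a + 1) ^ α * (a ^ α * ((a + 1) + K)) := by
        apply mul_le_mul_of_nonneg_left _ hbpow.le
        calc (a + 1) ^ α * (a + 1) = (a + 1) ^ (1 + α) := by rw [hbpow1]; ring
          _ ≤ a ^ α * ((a + 1) + K) := key
    _ = ((a + 1) * (a + 1) ^ α + K * (a + 1) ^ α) * a ^ α := by ring
    _ = (1 * ((a + 1) * (a + 1) ^ α) + (a + 1) ^ α * K) * a ^ α := by ring

theorem stmt_0 (E : ℕ → ℝ) (C δ : ℝ) (hC : 0 < C) (hδ : -1 < δ)
    (hpos : ∀ k, 0 < E k)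
    (hrec : ∀ k, E (k + 1) ≤ E k - C * E (k + 1) ^ (2 + δ)) :
    ∃ M > 0, ∀ k, E k ≤ M / ((k : ℝ) + 1) ^ (1 / (1 + δ)) := by
  have h1δ : (0:ℝ) < 1 + δ := by linarith
  set α : ℝ := 1 / (1 + δ) with hαdef
  have hα : 0 < α := by positivity
  set K : ℝ := 2 * α * Real.exp α with hKdef
  have hK : 0 < K := by positivity
  set M : ℝ := max (E 0) ((K / C) ^ α) with hMdef
  have hM : 0 < M := lt_max_of_lt_left (hpos 0)
  have hM1 : E 0 ≤ M := le_max_left _ _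
  have hM2 : K ≤ C * M ^ (1 + δ) := by
    have h0 : (0:ℝ) ≤ (K / C) ^ α := (Real.rpow_pos_of_pos (by positivity) α).le
    have h1 : ((K / C) ^ α) ^ (1 + δ) ≤ M ^ (1 + δ) :=
      Real.rpow_le_rpow h0 (le_max_right _ _) h1δ.le
    rw [← Real.rpow_mul (by positivity : (0:ℝ) ≤ K / C)] at h1
    have hone : α * (1 + δ) = 1 := by rw [hαdef]; field_simp
    rw [hone, Real.rpow_one] at h1
    rw [div_le_iff₀ hC] at h1
    linarith [h1]
  refine ⟨M, hM, ?_⟩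
  intro k
  induction k with
  | zero =>
    have h0 : ((0:ℕ):ℝ) + 1 = 1 := by norm_num
    rw [h0, Real.one_rpow, div_one]
    exact hM1
  | succ n ih =>
    by_contra hcon
    push_neg at hcon
    have hcast : ((n + 1 : ℕ) : ℝ) + 1 = (n : ℝ) + 2 := by push_cast; ring
    rw [hcast] at hcon
    set a : ℝ := (n : ℝ) + 1 with hadef
    have ha1 : (1:ℝ) ≤ a := by
      have : (0:ℝ) ≤ (n:ℝ) := Nat.cast_nonneg n
      rw [hadef]; linarith
    have ha0 : (0:ℝ) < a := by linarith
    have hb0 : (0:ℝ) < a + 1 := by linarith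
    have haa : (n : ℝ) + 2 = a + 1 := by rw [hadef]; ring
    rw [haa] at hcon
    set B : ℝ := M / (a + 1) ^ α with hBdef
    have hBpos : 0 < B := by
      have := Real.rpow_pos_of_pos hb0 α
      positivity
    -- E n > B + C * B^(2+δ)
    have hstep : B + C * B ^ (2 + δ) < E n := by
      have h2δ : (0:ℝ) ≤ 2 + δ := by linarith
      have h1 := hrec n
      have h2 : B ^ (2 + δ) ≤ E (n + 1) ^ (2 + δ) :=
        Real.rpow_le_rpow hBpos.le hcon.le h2δ
      nlinarith [mul_le_mul_of_nonneg_left h2 hC.le]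
    -- key : M / a^α ≤ B + C * B^(2+δ)
    have hexp : ((a + 1) ^ α) ^ (2 + δ) = (a + 1) ^ (1 + α) := by
      rw [← Real.rpow_mul hb0.le]
      congr 1
      rw [hαdef]; field_simp; ring
    have hMexp : M ^ (2 + δ) = M * M ^ (1 + δ) := by
      rw [show (2+δ) = 1 + (1+δ) by ring, Real.rpow_add hM, Real.rpow_one]
    have hBexp : C * B ^ (2 + δ) = (C * M ^ (1 + δ)) * (M / (a + 1) ^ (1 + α)) := by
      rw [hBdef, Real.div_rpow hM.le (Real.rpow_pos_of_pos hb0 α).le, hexp, hMexp]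
      ring
    have hKM : K * (M / (a + 1) ^ (1 + α)) ≤ C * B ^ (2 + δ) := by
      rw [hBexp]
      have hpp : 0 < M / (a + 1) ^ (1 + α) := by
        have := Real.rpow_pos_of_pos hb0 (1 + α); positivity
      exact mul_le_mul_of_nonneg_right hM2 hpp.le
    have haux := aux2 α a K hα ha1 le_rfl
    have hkey : M / a ^ α ≤ B + C * B ^ (2 + δ) := by
      have hMa := mul_le_mul_of_nonneg_left haux hM.le
      have he1 : M * (1 / a ^ α) = M / a ^ α := by ring
      have he2 : M * (1 / (a + 1) ^ α + K / (a + 1) ^ (1 + α))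
          = B + K * (M / (a + 1) ^ (1 + α)) := by
        rw [hBdef]; ring
      rw [he1, he2] at hMa
      linarith
    -- contradiction with ih
    have : M / a ^ α < M / a ^ α := by
      calc M / a ^ α ≤ B + C * B ^ (2 + δ) := hkey
        _ < E n := hstep
        _ ≤ M / a ^ α := by rw [hadef]; exact ih
    exact absurd this (lt_irrefl _)
end

section
/- Let (E_k)_{k≥0} be a sequence of positive real numbers satisfying E_{k+1} ≤ E_k − C·E_{k+1}^{1+α} for all k ≥ 0, where C > 0 and α > 0. Then there exists M > 0 such that E_k ≤ M/(k+1)^{1/α} for all k ≥ 0. -/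
open Real

/-- Bernoulli-type inequality for negative exponents: `1 - p*s ≤ (1+s)^(-p)`. -/
lemma bern_neg {p s : ℝ} (hp : 0 < p) (hs : 0 ≤ s) : 1 - p * s ≤ (1 + s) ^ (-p : ℝ) := by
  have h1 : (0:ℝ) < 1 + s := by linarith
  have hlog : Real.log (1 + s) ≤ s := by
    have := Real.log_le_sub_one_of_pos h1; linarith
  have h2 : -(p * s) ≤ (-p) * Real.log (1 + s) := by
    have := mul_le_mul_of_nonneg_left hlog hp.le
    linarith
  rw [Real.rpow_def_of_pos h1, mul_comm (Real.log (1 + s)) (-p)]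
  have h3 := Real.add_one_le_exp (-(p * s))
  have h4 := Real.exp_le_exp.2 h2
  linarith

/-- The key one-step inequality: with `C*M^α ≥ (1/α)*2^(1+1/α)` and `a ≥ 1`,
`M * a^(-1/α) ≤ M * (a+1)^(-1/α) + C * (M*(a+1)^(-1/α))^(1+α)`. -/
lemma key_step {C α M a : ℝ} (hC : 0 < C) (hα : 0 < α) (hM : 0 < M)
    (hCM : (1/α) * 2 ^ (1 + 1/α) ≤ C * M ^ α) (ha : 1 ≤ a) :
    M * a ^ (-(1/α)) ≤ M * (a+1) ^ (-(1/α)) + C * (M * (a+1) ^ (-(1/α))) ^ (1 + α) := by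
  set p : ℝ := 1/α with hp
  have hp0 : 0 < p := by positivity
  have ha0 : 0 < a := lt_of_lt_of_le one_pos ha
  have ha1 : (0:ℝ) < a + 1 := by linarith
  -- rewrite the power term
  have hb0 : (0:ℝ) ≤ (a+1) ^ (-p) := (Real.rpow_pos_of_pos ha1 _).le
  have hexp : (-p) * (1+α) = -(p+1) := by rw [hp]; field_simp
  have hpow : (M * (a+1) ^ (-p)) ^ (1 + α) = M ^ (1+α) * (a+1) ^ (-(p+1)) := by
    rw [Real.mul_rpow hM.le hb0, ← Real.rpow_mul ha1.le, hexp]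
  rw [hpow]
  -- Bernoulli: a^(-p) - (a+1)^(-p) ≤ p * a^(-(p+1))
  have hber : a ^ (-p) - (a+1) ^ (-p) ≤ p * a ^ (-(p+1)) := by
    have hs : (0:ℝ) ≤ 1/a := by positivity
    have h := bern_neg hp0 hs
    have heq : (a+1) ^ (-p) = a ^ (-p) * (1 + 1/a) ^ (-p) := by
      rw [← Real.mul_rpow ha0.le (by positivity)]
      congr 1
      field_simp
    have hpos1 : (0:ℝ) < a ^ (-p) := Real.rpow_pos_of_pos ha0 _
    have h2 : a ^ (-p) * (1 - p * (1/a)) ≤ (a+1) ^ (-p) := by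
      rw [heq]
      exact mul_le_mul_of_nonneg_left h hpos1.le
    have h3 : a ^ (-(p+1)) = a ^ (-p) * (1/a) := by
      rw [one_div, ← Real.rpow_neg_one a, ← Real.rpow_add ha0]
      congr 1; ring
    nlinarith [hpos1]
  -- a^(-(p+1)) ≤ 2^(p+1) * (a+1)^(-(p+1))
  have hdbl : a ^ (-(p+1)) ≤ 2 ^ (p+1) * (a+1) ^ (-(p+1)) := by
    have h2a : a + 1 ≤ 2 * a := by linarith
    have h1 : (a+1) ^ (p+1) ≤ (2*a) ^ (p+1) := by
      apply Real.rpow_le_rpow ha1.le h2a (by positivity)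
    have h2 : (2*a) ^ (p+1) = 2 ^ (p+1) * a ^ (p+1) :=
      Real.mul_rpow (by norm_num) ha0.le
    have hainv : a ^ (-(p+1)) = (a ^ (p+1))⁻¹ := by
      rw [Real.rpow_neg ha0.le]
    have hbinv : (a+1) ^ (-(p+1)) = ((a+1) ^ (p+1))⁻¹ := by
      rw [Real.rpow_neg ha1.le]
    have hap : (0:ℝ) < a ^ (p+1) := Real.rpow_pos_of_pos ha0 _
    have hbp : (0:ℝ) < (a+1) ^ (p+1) := Real.rpow_pos_of_pos ha1 _
    have hkey : (a+1) ^ (p+1) ≤ 2 ^ (p+1) * a ^ (p+1) := by rw [← h2]; exact h1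
    rw [hainv, hbinv, ← one_div, ← div_eq_mul_inv, div_le_div_iff₀ hap hbp]
    nlinarith [hkey]
  -- C * M^α bound
  have hMα : p * 2 ^ (p+1) ≤ C * M ^ α := by
    have : 1 + 1/α = p + 1 := by rw [hp]; ring
    rw [← this]
    exact hCM
  -- assemble
  have hM1α : M ^ (1+α) = M * M ^ α := by
    rw [Real.rpow_add hM, Real.rpow_one]
  have hbp1 : (0:ℝ) < (a+1) ^ (-(p+1)) := Real.rpow_pos_of_pos ha1 _
  have hchain : M * a ^ (-p) - M * (a+1) ^ (-p) ≤ C * (M ^ (1+α) * (a+1) ^ (-(p+1))) := by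
    have s1 : M * a ^ (-p) - M * (a+1) ^ (-p) ≤ M * (p * a ^ (-(p+1))) := by
      nlinarith [hber]
    have s2 : M * (p * a ^ (-(p+1))) ≤ M * (p * (2 ^ (p+1) * (a+1) ^ (-(p+1)))) := by
      have := mul_le_mul_of_nonneg_left hdbl hp0.le
      nlinarith [this]
    have s3 : M * (p * (2 ^ (p+1) * (a+1) ^ (-(p+1)))) ≤ C * (M ^ (1+α) * (a+1) ^ (-(p+1))) := by
      rw [hM1α]
      have := mul_le_mul_of_nonneg_right hMα
        (by positivity : (0:ℝ) ≤ M * (a+1) ^ (-(p+1)))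
      nlinarith [this]
    linarith
  linarith

theorem stmt_1 (E : ℕ → ℝ) (C α : ℝ) (hC : 0 < C) (hα : 0 < α)
    (hpos : ∀ k, 0 < E k)
    (hrec : ∀ k, E (k + 1) ≤ E k - C * E (k + 1) ^ (1 + α)) :
    ∃ M > 0, ∀ k, E k ≤ M / ((k : ℝ) + 1) ^ (1 / α) := by
  set M : ℝ := max (E 0) ((1/(C*α) * 2 ^ (1 + 1/α)) ^ (1/α)) with hMdef
  have hX : (0:ℝ) < 1/(C*α) * 2 ^ (1 + 1/α) := by positivity
  have hM0 : 0 < M := lt_of_lt_of_le (hpos 0) (le_max_left _ _)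
  have hCM : (1/α) * 2 ^ (1 + 1/α) ≤ C * M ^ α := by
    have h1 : (1/(C*α) * 2 ^ (1 + 1/α)) ^ (1/α) ≤ M := le_max_right _ _
    have h2 : ((1/(C*α) * 2 ^ (1 + 1/α)) ^ (1/α)) ^ α ≤ M ^ α :=
      Real.rpow_le_rpow (Real.rpow_nonneg hX.le _) h1 hα.le
    rw [← Real.rpow_mul hX.le, one_div_mul_cancel hα.ne', Real.rpow_one] at h2
    calc (1/α) * 2 ^ (1 + 1/α) = C * (1/(C*α) * 2 ^ (1 + 1/α)) := by
          field_simp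
      _ ≤ C * M ^ α := by nlinarith
  refine ⟨M, hM0, ?_⟩
  intro k
  have hdiv : ∀ x : ℝ, 0 < x → M / x ^ (1/α) = M * x ^ (-(1/α)) := by
    intro x hx
    rw [Real.rpow_neg hx.le, div_eq_mul_inv]
  induction k with
  | zero =>
    simp only [Nat.cast_zero, zero_add, Real.one_rpow, div_one]
    exact le_max_left _ _
  | succ n ih =>
    have hn1 : (0:ℝ) < (n:ℝ) + 1 := by positivity
    have hn2 : (0:ℝ) < ((n:ℝ) + 1) + 1 := by positivity
    have hcast : ((n+1 : ℕ) : ℝ) + 1 = ((n:ℝ) + 1) + 1 := by push_cast; ring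
    rw [hcast, hdiv _ hn2]
    by_contra hcon
    push_neg at hcon
    set t : ℝ := M * (((n:ℝ)+1)+1) ^ (-(1/α)) with ht
    have ht0 : 0 < t := by positivity
    -- monotonicity of x + C x^(1+α)
    have hmono : t + C * t ^ (1+α) < E (n+1) + C * E (n+1) ^ (1+α) := by
      have h1 : t ^ (1+α) < E (n+1) ^ (1+α) :=
        Real.rpow_lt_rpow ht0.le hcon (by positivity)
      nlinarith [h1]
    have hrecn := hrec n
    have hchain : t + C * t ^ (1+α) < E n := by linarith
    have hkey := key_step hC hα hM0 hCM (by linarith [hn1] : (1:ℝ) ≤ (n:ℝ)+1)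
    have hihn : E n ≤ M * ((n:ℝ)+1) ^ (-(1/α)) := by
      rw [← hdiv _ hn1]; exact ih
    linarith
end

section
/- Let H₁, H₂ be Hilbert spaces, A₁ a positive self-adjoint operator on H₁, A₂ : H₁ → H₂ bounded (in the appropriate scale), C a bounded coupling operator, and τ > 0. Define on ℋ = D(A₁^{1/2}) × H₁ × H₂ × H₁ the operator 𝒜_d(u₁,u₂,v,w) = (u₂, −A₁u₁ − Cv, C*u₂ − A₂w, (1/τ)A₂*v − (1/τ)w) with the inner product whose fourth component carries weight τ. Then for every (u₁,u₂,v,w) in the domain of 𝒜_d, Re⟨𝒜_d(u₁,u₂,v,w), (u₁,u₂,v,w)⟩_ℋ = −‖w‖²_{H₁}; in particular 𝒜_d is dissipative. -/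
/-!
The undamped part of `𝒜_d` is skew-adjoint for the energy inner product: the pairing
`⟪S u₂, S u₁⟫` (with `S = A₁^{1/2}`) cancels against `-A₁ u₁`, and each coupling operator
`C`, `A₂` enters once as `B` and once as `-B*`. Since `Re (⟪x, y⟫ - ⟪y, x⟫) = 0`, all these
terms vanish in the real part, and only the damping `-(1/τ) w`, weighted by `τ`, survives.
-/

section

open ContinuousLinearMap

variable {𝕜 E : Type*} [RCLike 𝕜] [NormedAddCommGroup E] [InnerProductSpace 𝕜 E]

theorem inner_apply_apply_of_adjoint_eq_self [CompleteSpace E] {S : E →L[𝕜] E}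
    (hS : adjoint S = S) (x y : E) : inner 𝕜 (S x) (S y) = inner 𝕜 x ((S.comp S) y) := by
  nth_rewrite 1 [← hS]
  exact adjoint_inner_left S (S y) x

theorem mul_inner_one_div_smul_left_of_conj_eq {c : 𝕜} (hc : c ≠ 0)
    (hc_real : starRingEnd 𝕜 c = c) (x y : E) :
    c * inner 𝕜 ((1 / c) • x) y = inner 𝕜 x y := by
  rw [inner_smul_left, map_div₀, map_one, hc_real, ← mul_assoc, mul_one_div_cancel hc, one_mul]

end

open ContinuousLinearMap in
/-- The dissipativity identity for the abstract thermo-elastic operator with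
Cattaneo law: `Re⟨𝒜_d(u₁,u₂,v,w), (u₁,u₂,v,w)⟩_ℋ = -‖w‖²`, where the inner
product on `ℋ = H_{1,1/2} × H₁ × H₂ × H₁^τ` is
`⟨A₁^{1/2}u₁, A₁^{1/2}v₁⟩ + ⟨u₂,v₂⟩ + ⟨u₃,v₃⟩ + τ⟨u₄,v₄⟩`.
Here `S` plays the role of `A₁^{1/2}` (selfadjoint with `S ∘ S = A₁`). -/
theorem stmt_4 {H₁ H₂ : Type*}
    [NormedAddCommGroup H₁] [InnerProductSpace ℂ H₁] [CompleteSpace H₁]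
    [NormedAddCommGroup H₂] [InnerProductSpace ℂ H₂] [CompleteSpace H₂]
    (S A₁ : H₁ →L[ℂ] H₁) (hS : ContinuousLinearMap.adjoint S = S)
    (hA₁ : A₁ = S.comp S)
    (A₂ : H₁ →L[ℂ] H₂) (C : H₂ →L[ℂ] H₁)
    (τ : ℝ) (hτ : 0 < τ)
    (u₁ u₂ w : H₁) (v : H₂) :
    ((inner ℂ (S u₂) (S u₁) : ℂ)
      + (inner ℂ (-(A₁ u₁) - C v) u₂ : ℂ)
      + (inner ℂ ((ContinuousLinearMap.adjoint C) u₂ - A₂ w) v : ℂ)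
      + (τ : ℂ) * (inner ℂ ((1 / (τ : ℂ)) • ((ContinuousLinearMap.adjoint A₂) v)
          - (1 / (τ : ℂ)) • w) w : ℂ)).re = -‖w‖ ^ 2 := by
  have h_elastic : inner ℂ (S u₂) (S u₁) = inner ℂ u₂ (A₁ u₁) := by
    rw [hA₁, inner_apply_apply_of_adjoint_eq_self hS]
  have h_damping : (τ : ℂ) * inner ℂ ((1 / (τ : ℂ)) • adjoint A₂ v - (1 / (τ : ℂ)) • w) w
      = inner ℂ v (A₂ w) - inner ℂ w w := by
    rw [← smul_sub, mul_inner_one_div_smul_left_of_conj_eq (Complex.ofReal_ne_zero.mpr hτ.ne')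
      (Complex.conj_ofReal τ), inner_sub_left, adjoint_inner_left]
  rw [h_elastic, h_damping, ← RCLike.re_to_complex]
  simp only [inner_sub_left, inner_neg_left, adjoint_inner_left, map_add, map_sub, map_neg]
  rw [inner_re_symm u₂ (A₁ u₁), inner_re_symm u₂ (C v), inner_re_symm v (A₂ w),
    inner_self_eq_norm_sq]
  ring
end
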